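/- Let X be a Banach lattice with property (P) and F : 𝒜 → X a finitely additive set function with ‖F‖_{ba₀(𝒜,X)} < ∞. Then the absolute value |F| = F ∨ (−F) exists in ba₀(𝒜, X) and is given by the norm limit over partitions π of the set functions F_π(A) = Σ_{E∈π} |F(A ∩ E)|; moreover ‖|F|‖ = ‖F‖. -/

import Mathlib

noncomputable section
open Filter Set

variable {Ω : Type}

/-- `C` is an algebra of subsets of `Ω`. -/
def IsSetAlg (C : Set (Set Ω)) : Prop :=
  ∅ ∈ C ∧ (∀ A ∈ C, Aᶜ ∈ C) ∧ ∀ A ∈ C, ∀ B ∈ C, A ∪ B ∈ C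

/-- `π` is a partition of `A` into finitely many members of `C`. -/
def IsPartition (C : Set (Set Ω)) (π : Finset (Set Ω)) (A : Set Ω) : Prop :=
  (∀ E ∈ π, E ∈ C) ∧ (π : Set (Set Ω)).PairwiseDisjoint id ∧
    ⋃₀ (π : Set (Set Ω)) = A

variable {X : Type} [NormedAddCommGroup X] [Lattice X] [HasSolidNorm X] [IsOrderedAddMonoid X] [NormedSpace ℝ X] [CompleteSpace X]

/-- `F : C → X` is finitely additive. -/
def IsFinAddV (C : Set (Set Ω)) (F : Set Ω → X) : Prop :=
  F ∅ = 0 ∧ ∀ A ∈ C, ∀ B ∈ C, Disjoint A B → F (A ∪ B) = F A + F B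

/-- The variation sums `‖Σ_{A∈π} |F A|‖` over finite `C`-partitions `π` of `Ω`. -/
def vSums (C : Set (Set Ω)) (F : Set Ω → X) : Set ℝ :=
  {x | ∃ π : Finset (Set Ω), IsPartition C π univ ∧ x = ‖∑ E ∈ π, |F E|‖}

/-- The `ba₀(C, X)` norm. -/
def ba0Norm (C : Set (Set Ω)) (F : Set Ω → X) : ℝ :=
  sSup (vSums C F)

/-- `F ∈ ba₀(C, X)`. -/
def Memba0 (C : Set (Set Ω)) (F : Set Ω → X) : Prop :=
  IsFinAddV C F ∧ BddAbove (vSums C F)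

/-- Property (P) for `X`: every increasing norm bounded net admits a least upper bound
to which it converges in norm. -/
def PropertyP (X : Type) [NormedAddCommGroup X] [Lattice X] [HasSolidNorm X] [IsOrderedAddMonoid X] : Prop :=
  ∀ (ι : Type) [Preorder ι] [IsDirected ι (· ≤ ·)] [Nonempty ι] (f : ι → X),
    Monotone f → (∃ M, ∀ a, ‖f a‖ ≤ M) →
      ∃ x : X, IsLUB (Set.range f) x ∧ Tendsto f atTop (nhds x)

/-- `π` refines `π₀`. -/
def Refines (π π₀ : Finset (Set Ω)) : Prop :=
  ∀ E ∈ π, ∃ E₀ ∈ π₀, E ⊆ E₀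


/-!
For `A ∈ 𝒜` the net `π ↦ F_π(A)` is increasing, since by the triangle inequality refining a
partition can only increase a sum of absolute values, and it is norm bounded by `‖F‖`, since
`F_π(A) ≤ Σ_{B ∈ π ∧ {A, Aᶜ}} |F B|`. Property (P) therefore gives its limit `|F|(A)`.
Once `π` refines `{A, Aᶜ}`, `F_π` is additive on disjoint `A` and `B`, so `|F|` is finitely
additive. Every additive `G ≥ ±F` dominates each `F_π`, hence `|F|`. As `|F| ≥ 0`, its
`ba₀`-norm is `‖|F|(Ω)‖ = lim ‖F_π(Ω)‖ = ‖F‖`, and the net converges in `ba₀`-norm because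
`Σ_{A ∈ σ} ||F|(A) - F_π(A)| = |F|(Ω) - F_{σ ∧ π}(Ω)`.
-/

end

open Filter Set Topology

variable {Ω : Type}

theorem norm_le_norm_of_nonneg_of_le {E : Type*} [NormedAddCommGroup E] [Lattice E]
    [HasSolidNorm E] [IsOrderedAddMonoid E] {a b : E} (ha : 0 ≤ a) (hab : a ≤ b) :
    ‖a‖ ≤ ‖b‖ :=
  norm_le_norm_of_abs_le_abs (by rwa [abs_of_nonneg ha, abs_of_nonneg (ha.trans hab)])

namespace IsSetAlg

variable {C : Set (Set Ω)} {A B : Set Ω}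

theorem compl_mem (hC : IsSetAlg C) (hA : A ∈ C) : Aᶜ ∈ C := hC.2.1 A hA

theorem union_mem (hC : IsSetAlg C) (hA : A ∈ C) (hB : B ∈ C) : A ∪ B ∈ C := hC.2.2 A hA B hB

theorem univ_mem (hC : IsSetAlg C) : univ ∈ C := by simpa using hC.compl_mem hC.1

theorem inter_mem (hC : IsSetAlg C) (hA : A ∈ C) (hB : B ∈ C) : A ∩ B ∈ C := by
  simpa using hC.compl_mem (hC.union_mem (hC.compl_mem hA) (hC.compl_mem hB))

theorem biUnion_mem (hC : IsSetAlg C) {ι : Type*} (s : Finset ι) {f : ι → Set Ω}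
    (hf : ∀ i ∈ s, f i ∈ C) : ⋃ i ∈ s, f i ∈ C := by
  classical
  induction s using Finset.induction_on with
  | empty => simpa using hC.1
  | insert a s _ ih =>
    rw [Finset.set_biUnion_insert]
    exact hC.union_mem (hf a (s.mem_insert_self a))
      (ih fun i hi => hf i (Finset.mem_insert_of_mem hi))

end IsSetAlg

theorem Refines.refl (π : Finset (Set Ω)) : Refines π π := fun E hE => ⟨E, hE, subset_rfl⟩

theorem Refines.trans {π σ τ : Finset (Set Ω)} (hπσ : Refines π σ) (hστ : Refines σ τ) :
    Refines π τ := fun E hE =>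
  let ⟨E₁, hE₁, h₁⟩ := hπσ E hE
  let ⟨E₂, hE₂, h₂⟩ := hστ E₁ hE₁
  ⟨E₂, hE₂, h₁.trans h₂⟩

open Classical in
noncomputable def partInf (π σ : Finset (Set Ω)) : Finset (Set Ω) :=
  (π ×ˢ σ).image fun p => p.1 ∩ p.2

section partInf

variable {π σ : Finset (Set Ω)}

theorem refines_partInf_left : Refines (partInf π σ) π := by
  classical
  intro E hE
  obtain ⟨p, hp, rfl⟩ := Finset.mem_image.1 hE
  exact ⟨p.1, (Finset.mem_product.1 hp).1, inter_subset_left⟩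

theorem refines_partInf_right : Refines (partInf π σ) σ := by
  classical
  intro E hE
  obtain ⟨p, hp, rfl⟩ := Finset.mem_image.1 hE
  exact ⟨p.2, (Finset.mem_product.1 hp).2, inter_subset_right⟩

theorem pairwiseDisjoint_inter_prod (hπ : (π : Set (Set Ω)).PairwiseDisjoint id)
    (hσ : (σ : Set (Set Ω)).PairwiseDisjoint id) :
    ((π ×ˢ σ : Finset _) : Set (Set Ω × Set Ω)).PairwiseDisjoint fun p => p.1 ∩ p.2 := by
  rintro ⟨E, E'⟩ hp ⟨D, D'⟩ hq hne
  simp only [Finset.coe_product, Set.mem_prod, Finset.mem_coe] at hp hq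
  by_cases hED : E = D
  · have hE'D' : E' ≠ D' := fun h => hne (by rw [hED, h])
    exact (hσ hp.2 hq.2 hE'D').mono inter_subset_right inter_subset_right
  · exact (hπ hp.1 hq.1 hED).mono inter_subset_left inter_subset_left

theorem sum_partInf {M : Type*} [AddCommMonoid M] {g : Set Ω → M} (hg : g ∅ = 0)
    (hπ : (π : Set (Set Ω)).PairwiseDisjoint id) (hσ : (σ : Set (Set Ω)).PairwiseDisjoint id) :
    ∑ B ∈ partInf π σ, g B = ∑ E ∈ π, ∑ E' ∈ σ, g (E ∩ E') := by
  rw [partInf, Finset.sum_image_of_disjoint hg (pairwiseDisjoint_inter_prod hπ hσ),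
    Finset.sum_product]

theorem IsPartition.partInf {C : Set (Set Ω)} (hC : IsSetAlg C) (hπ : IsPartition C π univ)
    (hσ : IsPartition C σ univ) : IsPartition C (partInf π σ) univ := by
  classical
  refine ⟨?_, ?_, ?_⟩
  · intro E hE
    obtain ⟨p, hp, rfl⟩ := Finset.mem_image.1 hE
    obtain ⟨h₁, h₂⟩ := Finset.mem_product.1 hp
    exact hC.inter_mem (hπ.1 _ h₁) (hσ.1 _ h₂)
  · rw [_root_.partInf, Finset.coe_image]
    rintro _ ⟨p, hp, rfl⟩ _ ⟨q, hq, rfl⟩ hne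
    exact pairwiseDisjoint_inter_prod hπ.2.1 hσ.2.1 hp hq fun h => hne (h ▸ rfl)
  · refine eq_univ_of_forall fun x => ?_
    obtain ⟨E, hE, hxE⟩ := mem_sUnion.1 (hπ.2.2.symm ▸ mem_univ x)
    obtain ⟨E', hE', hxE'⟩ := mem_sUnion.1 (hσ.2.2.symm ▸ mem_univ x)
    exact ⟨E ∩ E', Finset.mem_image.2 ⟨(E, E'), Finset.mem_product.2 ⟨hE, hE'⟩, rfl⟩, hxE, hxE'⟩

end partInf

namespace IsPartition

variable {C : Set (Set Ω)}

theorem singleton_univ (hC : IsSetAlg C) : IsPartition C {univ} univ :=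
  ⟨by simpa using hC.univ_mem, by simp, by simp⟩

theorem pair_compl (hC : IsSetAlg C) {A : Set Ω} (hA : A ∈ C) : IsPartition C {A, Aᶜ} univ := by
  refine ⟨by simp [hA, hC.compl_mem hA], ?_, by simp⟩
  rw [Finset.coe_pair]
  exact pairwise_pair.2 fun _ => ⟨disjoint_compl_right, disjoint_compl_left⟩

end IsPartition

theorem sum_inter_eq_of_subset {M : Type*} [AddCommMonoid M] {g : Set Ω → M} (hg : g ∅ = 0)
    {π : Finset (Set Ω)} (hπ : (π : Set (Set Ω)).PairwiseDisjoint id) {S E₀ : Set Ω}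
    (hE₀ : E₀ ∈ π) (hS : S ⊆ E₀) : ∑ E ∈ π, g (S ∩ E) = g S := by
  rw [Finset.sum_eq_single_of_mem E₀ hE₀ fun E hE hne => ?_, inter_eq_left.2 hS]
  have hSE : Disjoint S E := ((hπ hE hE₀ hne).mono_right hS).symm
  rw [hSE.inter_eq, hg]

/-- The directed set `Π(𝒜)` of the paper. -/
structure AlgPartition (C : Set (Set Ω)) : Type where
  parts : Finset (Set Ω)
  isPartition : IsPartition C parts univ

instance (C : Set (Set Ω)) : Preorder (AlgPartition C) where
  le π σ := Refines σ.parts π.parts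
  le_refl π := Refines.refl π.parts
  le_trans _ _ _ h₁ h₂ := h₂.trans h₁

theorem IsSetAlg.isDirectedOrder_algPartition {C : Set (Set Ω)} (hC : IsSetAlg C) :
    IsDirectedOrder (AlgPartition C) :=
  ⟨fun π σ => ⟨⟨partInf π.parts σ.parts, π.isPartition.partInf hC σ.isPartition⟩,
    refines_partInf_left, refines_partInf_right⟩⟩

theorem IsSetAlg.nonempty_algPartition {C : Set (Set Ω)} (hC : IsSetAlg C) :
    Nonempty (AlgPartition C) :=
  ⟨⟨{univ}, .singleton_univ hC⟩⟩

section FinitelyAdditive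

variable {X : Type} [NormedAddCommGroup X] {C : Set (Set Ω)} {F : Set Ω → X} {A : Set Ω}
  {π : Finset (Set Ω)}

theorem IsFinAddV.map_biUnion (hC : IsSetAlg C) (hF : IsFinAddV C F) {ι : Type*}
    (s : Finset ι) {f : ι → Set Ω} (hf : ∀ i ∈ s, f i ∈ C)
    (hd : (s : Set ι).PairwiseDisjoint f) : F (⋃ i ∈ s, f i) = ∑ i ∈ s, F (f i) := by
  classical
  induction s using Finset.induction_on with
  | empty => simpa using hF.1
  | insert a s ha ih =>
    have hs : ∀ i ∈ s, f i ∈ C := fun i hi => hf i (Finset.mem_insert_of_mem hi)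
    have hdisj : Disjoint (f a) (⋃ i ∈ s, f i) := by
      refine disjoint_iUnion₂_right.2 fun i hi => hd (by simp) (by simp [hi]) ?_
      rintro rfl
      exact ha hi
    rw [Finset.set_biUnion_insert, Finset.sum_insert ha,
      hF.2 _ (hf a (s.mem_insert_self a)) _ (hC.biUnion_mem s hs) hdisj,
      ih hs (hd.subset (by simp))]

theorem IsFinAddV.sum_inter (hC : IsSetAlg C) (hF : IsFinAddV C F) (hA : A ∈ C)
    (hπ : IsPartition C π univ) : ∑ E ∈ π, F (A ∩ E) = F A := by
  have hunion : ⋃ E ∈ π, A ∩ E = A := by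
    rw [← inter_iUnion₂, ← Finset.set_biUnion_coe, ← sUnion_eq_biUnion, hπ.2.2, inter_univ]
  rw [← hF.map_biUnion hC π (fun E hE => hC.inter_mem hA (hπ.1 E hE))
    fun E hE E' hE' hne => (hπ.2.1 hE hE' hne).mono inter_subset_right inter_subset_right,
    hunion]

theorem IsFinAddV.sum_eq (hC : IsSetAlg C) (hF : IsFinAddV C F) (hπ : IsPartition C π univ) :
    ∑ E ∈ π, F E = F univ := by
  simpa using hF.sum_inter hC hC.univ_mem hπ

end FinitelyAdditive

section PartAbs

variable {X : Type} [NormedAddCommGroup X] [Lattice X] {C : Set (Set Ω)} {F : Set Ω → X}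
  {A B : Set Ω} {π σ : Finset (Set Ω)}

/-- The paper's `F_π`. -/
def partAbs (F : Set Ω → X) (π : Finset (Set Ω)) (A : Set Ω) : X :=
  ∑ E ∈ π, |F (A ∩ E)|

theorem partAbs_univ : partAbs F π univ = ∑ E ∈ π, |F E| := by
  simp only [partAbs, univ_inter]

theorem partAbs_singleton_univ : partAbs F {univ} A = |F A| := by
  simp only [partAbs, Finset.sum_singleton, inter_univ]

theorem vSums_eq_range : vSums C F = range fun π : AlgPartition C => ‖partAbs F π.parts univ‖ := by
  ext x
  constructor
  · rintro ⟨π, hπ, rfl⟩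
    exact ⟨⟨π, hπ⟩, by simp only [partAbs_univ]⟩
  · rintro ⟨π, rfl⟩
    exact ⟨π.parts, π.isPartition, by simp only [partAbs_univ]⟩

variable [IsOrderedAddMonoid X]

theorem partAbs_nonneg : 0 ≤ partAbs F π A :=
  Finset.sum_nonneg fun _ _ => abs_nonneg _

theorem abs_le_partAbs (hC : IsSetAlg C) (hF : IsFinAddV C F) (hA : A ∈ C)
    (hπ : IsPartition C π univ) : |F A| ≤ partAbs F π A := by
  rw [← hF.sum_inter hC hA hπ]
  exact Finset.le_sum_of_subadditive _ abs_zero.le abs_add_le _ _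

theorem partAbs_mono (hC : IsSetAlg C) (hF : IsFinAddV C F) (hA : A ∈ C)
    (hπ : IsPartition C π univ) (hσ : IsPartition C σ univ) (hσπ : Refines σ π) :
    partAbs F π A ≤ partAbs F σ A :=
  calc partAbs F π A
      ≤ ∑ E ∈ π, partAbs F σ (A ∩ E) :=
        Finset.sum_le_sum fun E hE => abs_le_partAbs hC hF (hC.inter_mem hA (hπ.1 E hE)) hσ
    _ = ∑ E' ∈ σ, ∑ E ∈ π, |F (A ∩ (E' ∩ E))| := by
        simp only [partAbs]
        rw [Finset.sum_comm]
        refine Finset.sum_congr rfl fun E' _ => Finset.sum_congr rfl fun E _ => ?_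
        rw [inter_assoc, inter_comm E]
    _ = partAbs F σ A := Finset.sum_congr rfl fun E' hE' => by
        obtain ⟨E₀, hE₀, hE'E₀⟩ := hσπ E' hE'
        exact sum_inter_eq_of_subset (g := fun S => |F (A ∩ S)|) (by simp [hF.1]) hπ.2.1 hE₀ hE'E₀

theorem partAbs_le_sum_partInf (hF : IsFinAddV C F) (hσ : IsPartition C σ univ)
    (hπ : IsPartition C π univ) (hA : A ∈ σ) : partAbs F π A ≤ ∑ B ∈ partInf σ π, |F B| := by
  rw [sum_partInf (by simp [hF.1]) hσ.2.1 hπ.2.1]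
  exact Finset.single_le_sum (f := fun S => partAbs F π S) (fun _ _ => partAbs_nonneg) hA

theorem partAbs_union (hF : IsFinAddV C F) (hAB : Disjoint A B) (hπA : Refines π {A, Aᶜ}) :
    partAbs F π (A ∪ B) = partAbs F π A + partAbs F π B := by
  rw [partAbs, partAbs, partAbs, ← Finset.sum_add_distrib]
  refine Finset.sum_congr rfl fun E hE => ?_
  rw [union_inter_distrib_right]
  obtain ⟨E₀, hE₀, hEE₀⟩ := hπA E hE
  obtain rfl | rfl : E₀ = A ∨ E₀ = Aᶜ := by simpa using hE₀
  · rw [(hAB.symm.mono_right hEE₀).inter_eq, union_empty, hF.1, abs_zero, add_zero]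
  · rw [(disjoint_compl_right.mono_right hEE₀).inter_eq, empty_union, hF.1, abs_zero, zero_add]

theorem norm_partAbs_le [HasSolidNorm X] (hC : IsSetAlg C) (hF : IsFinAddV C F) {M : ℝ}
    (hM : M ∈ upperBounds (vSums C F)) (hA : A ∈ C) (hπ : IsPartition C π univ) :
    ‖partAbs F π A‖ ≤ M := by
  have hAπ := (IsPartition.pair_compl hC hA).partInf hC hπ
  exact (norm_le_norm_of_nonneg_of_le partAbs_nonneg <| partAbs_le_sum_partInf hF
    (.pair_compl hC hA) hπ (Finset.mem_insert_self _ _)).trans (hM ⟨_, hAπ, rfl⟩)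

theorem partAbs_monotone (hC : IsSetAlg C) (hF : IsFinAddV C F) (hA : A ∈ C) :
    Monotone fun π : AlgPartition C => partAbs F π.parts A :=
  fun π σ h => partAbs_mono hC hF hA π.isPartition σ.isPartition h

end PartAbs

section Limit

variable {X : Type} [NormedAddCommGroup X] [Lattice X] [IsOrderedAddMonoid X]
  {C : Set (Set Ω)} {F G H : Set Ω → X} {A B : Set Ω}

def IsPartAbsLimit (C : Set (Set Ω)) (F G : Set Ω → X) : Prop :=
  ∀ A ∈ C, Tendsto (fun π : AlgPartition C => partAbs F π.parts A) atTop (𝓝 (G A))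

theorem vSums_eq_singleton_of_nonneg (hC : IsSetAlg C) (hG : IsFinAddV C G)
    (hG₀ : ∀ A ∈ C, 0 ≤ G A) : vSums C G = {‖G univ‖} := by
  ext x
  constructor
  · rintro ⟨π, hπ, rfl⟩
    rw [Finset.sum_congr rfl fun E hE => abs_of_nonneg (hG₀ E (hπ.1 E hE)), hG.sum_eq hC hπ]
    rfl
  · rintro rfl
    exact ⟨{univ}, .singleton_univ hC,
      by rw [Finset.sum_singleton, abs_of_nonneg (hG₀ _ hC.univ_mem)]⟩

theorem ba0Norm_eq_norm_univ_of_nonneg (hC : IsSetAlg C) (hG : IsFinAddV C G)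
    (hG₀ : ∀ A ∈ C, 0 ≤ G A) : ba0Norm C G = ‖G univ‖ := by
  rw [ba0Norm, vSums_eq_singleton_of_nonneg hC hG hG₀, csSup_singleton]

namespace IsPartAbsLimit

theorem isFinAddV (hC : IsSetAlg C) (hF : IsFinAddV C F) (hG : IsPartAbsLimit C F G) :
    IsFinAddV C G := by
  have := hC.isDirectedOrder_algPartition
  have := hC.nonempty_algPartition
  refine ⟨tendsto_nhds_unique (hG ∅ hC.1) ?_, fun A hA B hB hAB => ?_⟩
  · simp [partAbs, hF.1]
  · refine tendsto_nhds_unique (hG _ (hC.union_mem hA hB)) (((hG A hA).add (hG B hB)).congr' ?_)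
    exact eventually_atTop.2 ⟨⟨{A, Aᶜ}, .pair_compl hC hA⟩,
      fun π hπ => (partAbs_union hF hAB hπ).symm⟩

variable [HasSolidNorm X]

theorem le_of_abs_le (hC : IsSetAlg C) (hG : IsPartAbsLimit C F G) (hH : IsFinAddV C H)
    (hFH : ∀ A ∈ C, |F A| ≤ H A) (hA : A ∈ C) : G A ≤ H A := by
  have := hC.isDirectedOrder_algPartition
  have := hC.nonempty_algPartition
  refine le_of_tendsto' (hG A hA) fun π => ?_
  calc partAbs F π.parts A
      ≤ ∑ E ∈ π.parts, H (A ∩ E) := Finset.sum_le_sum fun E hE =>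
        hFH _ (hC.inter_mem hA (π.isPartition.1 E hE))
    _ = H A := hH.sum_inter hC hA π.isPartition

theorem partAbs_le (hC : IsSetAlg C) (hF : IsFinAddV C F) (hG : IsPartAbsLimit C F G)
    (hA : A ∈ C) (π : AlgPartition C) : partAbs F π.parts A ≤ G A :=
  have := hC.isDirectedOrder_algPartition
  (partAbs_monotone hC hF hA).ge_of_tendsto (hG A hA) π

theorem abs_le (hC : IsSetAlg C) (hF : IsFinAddV C F) (hG : IsPartAbsLimit C F G)
    (hA : A ∈ C) : |F A| ≤ G A :=
  partAbs_singleton_univ (F := F) ▸ hG.partAbs_le hC hF hA ⟨{univ}, .singleton_univ hC⟩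

theorem nonneg (hC : IsSetAlg C) (hF : IsFinAddV C F) (hG : IsPartAbsLimit C F G)
    (hA : A ∈ C) : 0 ≤ G A :=
  (abs_nonneg _).trans (hG.abs_le hC hF hA)

theorem isLUB_vSums (hC : IsSetAlg C) (hF : IsFinAddV C F) (hG : IsPartAbsLimit C F G) :
    IsLUB (vSums C F) ‖G univ‖ := by
  have := hC.isDirectedOrder_algPartition
  have := hC.nonempty_algPartition
  rw [vSums_eq_range]
  exact isLUB_of_tendsto_atTop (fun π σ h => norm_le_norm_of_nonneg_of_le partAbs_nonneg
    (partAbs_monotone hC hF hC.univ_mem h)) (hG univ hC.univ_mem).norm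

theorem ba0Norm_eq_norm_univ (hC : IsSetAlg C) (hF : IsFinAddV C F)
    (hG : IsPartAbsLimit C F G) : ba0Norm C F = ‖G univ‖ :=
  (hG.isLUB_vSums hC hF).csSup_eq ⟨_, {univ}, .singleton_univ hC, rfl⟩

theorem sum_abs_sub_partAbs (hC : IsSetAlg C) (hF : IsFinAddV C F) (hG : IsPartAbsLimit C F G)
    (π : AlgPartition C) {σ : Finset (Set Ω)} (hσ : IsPartition C σ univ) :
    ∑ A ∈ σ, |G A - partAbs F π.parts A| = G univ - partAbs F (partInf σ π.parts) univ := by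
  rw [Finset.sum_congr rfl fun A hA =>
      abs_of_nonneg (sub_nonneg.2 (hG.partAbs_le hC hF (hσ.1 A hA) π)),
    Finset.sum_sub_distrib, (hG.isFinAddV hC hF).sum_eq hC hσ, partAbs_univ,
    sum_partInf (by simp [hF.1]) hσ.2.1 π.isPartition.2.1]
  rfl

theorem ba0Norm_sub_partAbs_le (hC : IsSetAlg C) (hF : IsFinAddV C F)
    (hG : IsPartAbsLimit C F G) (π : AlgPartition C) {δ : ℝ}
    (hδ : ∀ τ : AlgPartition C, π ≤ τ → ‖G univ - partAbs F τ.parts univ‖ ≤ δ) :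
    ba0Norm C (fun A => G A - partAbs F π.parts A) ≤ δ := by
  refine csSup_le ⟨_, {univ}, .singleton_univ hC, rfl⟩ ?_
  rintro _ ⟨σ, hσ, rfl⟩
  rw [hG.sum_abs_sub_partAbs hC hF π hσ]
  exact hδ ⟨_, hσ.partInf hC π.isPartition⟩ refines_partInf_right

theorem exists_ba0Norm_sub_partAbs_lt (hC : IsSetAlg C) (hF : IsFinAddV C F)
    (hG : IsPartAbsLimit C F G) {ε : ℝ} (hε : 0 < ε) :
    ∃ π₀ : Finset (Set Ω), IsPartition C π₀ univ ∧
      ∀ π : Finset (Set Ω), IsPartition C π univ → Refines π π₀ →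
        ba0Norm C (fun A => G A - partAbs F π A) < ε := by
  have := hC.isDirectedOrder_algPartition
  have := hC.nonempty_algPartition
  obtain ⟨π₀, hπ₀⟩ := eventually_atTop.1 <|
    (hG univ hC.univ_mem).eventually (Metric.closedBall_mem_nhds _ (half_pos hε))
  refine ⟨π₀.parts, π₀.isPartition, fun π hπ hππ₀ => ?_⟩
  refine (hG.ba0Norm_sub_partAbs_le hC hF ⟨π, hπ⟩ fun τ hτ => ?_).trans_lt (half_lt_self hε)
  rw [← dist_eq_norm, dist_comm]
  exact hπ₀ τ (le_trans (b := ⟨π, hπ⟩) hππ₀ hτ)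

end IsPartAbsLimit

end Limit

theorem ba0_abs_exists_general {Ω : Type} {X : Type}
    [NormedAddCommGroup X] [Lattice X] [HasSolidNorm X] [IsOrderedAddMonoid X]
    (hP : PropertyP X) (C : Set (Set Ω)) (hC : IsSetAlg C)
    (F : Set Ω → X) (hF : Memba0 C F) :
    ∃ Fabs : Set Ω → X, Memba0 C Fabs ∧
      -- `Fabs` is the least upper bound of `F` and `-F` in `ba₀(C, X)`
      (∀ A ∈ C, F A ≤ Fabs A) ∧ (∀ A ∈ C, -F A ≤ Fabs A) ∧
      (∀ G : Set Ω → X, Memba0 C G → (∀ A ∈ C, F A ≤ G A) → (∀ A ∈ C, -F A ≤ G A) →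
        ∀ A ∈ C, Fabs A ≤ G A) ∧
      -- `Fabs` is the norm limit of the partition net `F_π`
      (∀ ε > (0:ℝ), ∃ π₀ : Finset (Set Ω), IsPartition C π₀ univ ∧
        ∀ π : Finset (Set Ω), IsPartition C π univ → Refines π π₀ →
          ba0Norm C (fun A => Fabs A - ∑ E ∈ π, |F (A ∩ E)|) < ε) ∧
      -- `‖|F|‖ = ‖F‖`
      ba0Norm C Fabs = ba0Norm C F := by
  obtain ⟨hFadd, M, hM⟩ := hF
  have := hC.isDirectedOrder_algPartition
  have := hC.nonempty_algPartition
  choose! G _ hG using fun A (hA : A ∈ C) =>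
    hP (AlgPartition C) (fun π => partAbs F π.parts A) (partAbs_monotone hC hFadd hA)
      ⟨M, fun π => norm_partAbs_le hC hFadd hM hA π.isPartition⟩
  have hlim : IsPartAbsLimit C F G := hG
  have hGadd := hlim.isFinAddV hC hFadd
  have hG₀ : ∀ A ∈ C, 0 ≤ G A := fun A hA => hlim.nonneg hC hFadd hA
  refine ⟨G, ⟨hGadd, vSums_eq_singleton_of_nonneg hC hGadd hG₀ ▸ bddAbove_singleton⟩,
    fun A hA => (le_abs_self _).trans (hlim.abs_le hC hFadd hA),
    fun A hA => (neg_le_abs _).trans (hlim.abs_le hC hFadd hA),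
    fun H hH hFH hnegFH A =>
      hlim.le_of_abs_le hC hH.1 fun B hB => abs_le'.2 ⟨hFH B hB, hnegFH B hB⟩,
    fun ε hε => hlim.exists_ba0Norm_sub_partAbs_lt hC hFadd hε, ?_⟩
  rw [ba0Norm_eq_norm_univ_of_nonneg hC hGadd hG₀, hlim.ba0Norm_eq_norm_univ hC hFadd]

/-- For `F ∈ ba₀(C, X)` with `X` a Banach lattice with property (P), the
absolute value `|F| = F ∨ (−F)` exists in `ba₀(C, X)`: it is the least upper bound of
`F` and `−F` in the setwise order, it is the norm limit over the refinement-directed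
net of partitions of the set functions `F_π (A) = Σ_{E∈π} |F (A ∩ E)|`, and
`‖|F|‖ = ‖F‖`. -/
theorem ba0_abs_exists {Ω : Type} {X : Type}
    [NormedAddCommGroup X] [Lattice X] [HasSolidNorm X] [IsOrderedAddMonoid X] [NormedSpace ℝ X] [CompleteSpace X]
    (hP : PropertyP X) (C : Set (Set Ω)) (hC : IsSetAlg C)
    (F : Set Ω → X) (hF : Memba0 C F) :
    ∃ Fabs : Set Ω → X, Memba0 C Fabs ∧
      -- `Fabs` is the least upper bound of `F` and `-F` in `ba₀(C, X)`
      (∀ A ∈ C, F A ≤ Fabs A) ∧ (∀ A ∈ C, -F A ≤ Fabs A) ∧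
      (∀ G : Set Ω → X, Memba0 C G → (∀ A ∈ C, F A ≤ G A) → (∀ A ∈ C, -F A ≤ G A) →
        ∀ A ∈ C, Fabs A ≤ G A) ∧
      -- `Fabs` is the norm limit of the partition net `F_π`
      (∀ ε > (0:ℝ), ∃ π₀ : Finset (Set Ω), IsPartition C π₀ univ ∧
        ∀ π : Finset (Set Ω), IsPartition C π univ → Refines π π₀ →
          ba0Norm C (fun A => Fabs A - ∑ E ∈ π, |F (A ∩ E)|) < ε) ∧
      -- `‖|F|‖ = ‖F‖`
      ba0Norm C Fabs = ba0Norm C F :=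
  ba0_abs_exists_general hP C hC F hF
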